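/- arXiv:2502.12679 — 2 statements merged into one kernel-verified Lean document; each statement's English description precedes it below -/
import Mathlib

section
/- Let f : [a,b] → ℝ be Riemann integrable and φ : [α,β] → [a,b] be continuous, differentiable on (α,β), with φ(α) = a and φ(β) = b. If (f∘φ)·φ' is Riemann integrable on [α,β], then ∫_a^b f(x) dx = ∫_α^β f(φ(t))·φ'(t) dt. -/
/-!
Put `F x = ∫ u in a..x, f u` and `G s = ∫ t in α..s, f (φ t) * φ' t`; both are Lipschitz since
the integrands are bounded, and it suffices to show that `D = F ∘ φ - G` is constant on `[α, β]`.

By Lebesgue's differentiation theorem `F' = f` off a null set `N`. Where `φ' ≠ 0`, `φ` is locally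
expanding, so those points with `φ t ∈ N` form a null set; where `φ' = 0`, the Lipschitz bound on
`F` gives `(F ∘ φ)' = 0`. Hence `D' = 0` almost everywhere on `(α, β)`.

At every interior point `D u - D t = O(u - t)`, so `D` maps null sets to null sets, while the set
where `D' = 0` has a null image by the one-dimensional Sard lemma. Thus `D '' [α, β]` is null; being
an interval by the intermediate value theorem, it is a point.
-/

open MeasureTheory Set Filter Topology intervalIntegral

/-- A function is Riemann integrable on a set (Lebesgue criterion): it is bounded
on the set and continuous (within the set) at almost every point of the set. -/
def RiemannIntegrableOn (f : ℝ → ℝ) (s : Set ℝ) : Prop :=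
  (∃ M, ∀ x ∈ s, |f x| ≤ M) ∧
  ∀ᵐ x ∂(volume.restrict s), ContinuousWithinAt f s x

open Asymptotics Metric
open scoped NNReal

theorem LipschitzOnWith.volume_image_null {K : ℝ≥0} {g : ℝ → ℝ} {s : Set ℝ}
    (hg : LipschitzOnWith K g s) (hs : volume s = 0) : volume (g '' s) = 0 := by
  have h := hg.hausdorffMeasure_image_le zero_le_one
  rw [hausdorffMeasure_real, hs] at h
  simpa using h

theorem volume_image_null_of_dist_le_mul_dist {u v : ℝ → ℝ} {s : Set ℝ} {K : ℝ≥0}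
    (huv : ∀ y ∈ s, ∀ z ∈ s, dist (u y) (u z) ≤ K * dist (v y) (v z))
    (hv : volume (v '' s) = 0) : volume (u '' s) = 0 := by
  set w := u ∘ Function.invFunOn v s
  have hinv : ∀ y ∈ s, Function.invFunOn v s (v y) ∈ s ∧ v (Function.invFunOn v s (v y)) = v y :=
    fun y hy => ⟨Function.invFunOn_mem ⟨y, hy, rfl⟩, Function.invFunOn_eq ⟨y, hy, rfl⟩⟩
  have hw : LipschitzOnWith K w (v '' s) := by
    refine LipschitzOnWith.of_dist_le_mul ?_
    rintro _ ⟨y, hy, rfl⟩ _ ⟨z, hz, rfl⟩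
    obtain ⟨hy', hvy⟩ := hinv y hy
    obtain ⟨hz', hvz⟩ := hinv z hz
    simpa only [w, Function.comp_apply, hvy, hvz] using huv _ hy' _ hz'
  have hsub : u '' s ⊆ w '' (v '' s) := by
    rintro _ ⟨y, hy, rfl⟩
    obtain ⟨hy', hvy⟩ := hinv y hy
    refine ⟨v y, mem_image_of_mem v hy, dist_le_zero.1 ?_⟩
    simpa [w, hvy] using huv _ hy' y hy
  exact measure_mono_null hsub (hw.volume_image_null hv)

theorem measure_image_null_of_locally_null {α β : Type*} [TopologicalSpace α]
    [SecondCountableTopology α] [MeasurableSpace β] {μ : Measure β} {g : α → β} {s : Set α}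
    (hs : ∀ x ∈ s, ∃ U ∈ 𝓝 x, μ (g '' (s ∩ U)) = 0) : μ (g '' s) = 0 := by
  choose! U hU hμU using hs
  obtain ⟨t, hts, htc, hcover⟩ := TopologicalSpace.countable_cover_nhdsWithin
    fun x hx => inter_mem_nhdsWithin s (hU x hx)
  refine measure_mono_null (image_mono hcover) ?_
  rw [image_iUnion₂]
  exact (measure_biUnion_null_iff htc).2 fun x hx => hμU x (hts hx)

theorem volume_image_null_of_isBigO_sub {u v : ℝ → ℝ} {s : Set ℝ} (hv : volume (v '' s) = 0)
    (huv : ∀ x ∈ s, (u · - u x) =O[𝓝 x] (v · - v x)) : volume (u '' s) = 0 := by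
  set S : ℕ → Set ℝ := fun n =>
    {x ∈ s | ∀ y, dist y x < (n + 1 : ℝ)⁻¹ → dist (u y) (u x) ≤ n * dist (v y) (v x)}
  have hcover : s ⊆ ⋃ n, S n := by
    intro x hx
    obtain ⟨c, hc⟩ := (huv x hx).bound
    obtain ⟨ε, hε, hεc⟩ := Metric.eventually_nhds_iff.1 hc
    obtain ⟨n₁, hn₁⟩ := exists_nat_ge c
    obtain ⟨n₂, hn₂⟩ := exists_nat_one_div_lt hε
    refine mem_iUnion.2 ⟨max n₁ n₂, hx, fun y hy => ?_⟩
    have hyx : dist y x < ε := by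
      refine hy.trans (lt_of_le_of_lt ?_ hn₂)
      rw [one_div]
      gcongr
      exact_mod_cast le_max_right n₁ n₂
    calc dist (u y) (u x) ≤ c * dist (v y) (v x) := hεc hyx
      _ ≤ max n₁ n₂ * dist (v y) (v x) := by
        gcongr
        exact hn₁.trans (by exact_mod_cast le_max_left n₁ n₂)
  -- Two points of `S n` closer than `(n + 1)⁻¹` satisfy the estimate of `S n` with each other,
  -- so on small balls `u` is an `n`-Lipschitz function of `v`.
  refine measure_mono_null ((image_mono hcover).trans (image_iUnion).subset)
    (measure_iUnion_null fun n => measure_image_null_of_locally_null fun x _ => ?_)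
  refine ⟨ball x (2 * (n + 1 : ℝ))⁻¹, ball_mem_nhds x (by positivity), ?_⟩
  refine volume_image_null_of_dist_le_mul_dist (K := n) (fun y hy z hz => ?_)
    (measure_mono_null (image_mono (inter_subset_left.trans (sep_subset s _))) hv)
  have hyz : dist y z < (n + 1 : ℝ)⁻¹ := by
    calc dist y z ≤ dist y x + dist z x := dist_triangle_right y z x
      _ < (2 * (n + 1 : ℝ))⁻¹ + (2 * (n + 1 : ℝ))⁻¹ := add_lt_add hy.2 hz.2
      _ = (n + 1 : ℝ)⁻¹ := by field_simp; ring
  simpa using hz.1.2 y hyz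

theorem volume_image_null_of_hasDerivAt_zero {g : ℝ → ℝ} {s : Set ℝ}
    (hg : ∀ x ∈ s, HasDerivAt g 0 x) : volume (g '' s) = 0 :=
  addHaar_image_eq_zero_of_det_fderivWithin_eq_zero volume (f' := fun _ => 0)
    (fun x hx => by simpa using (hg x hx).hasFDerivAt.hasFDerivWithinAt) (fun _ _ => by simp)

theorem eq_of_isBigO_sub_of_ae_hasDerivAt_zero {g : ℝ → ℝ} {a b : ℝ} (hab : a ≤ b)
    (hc : ContinuousOn g (Icc a b)) (hO : ∀ x ∈ Ioo a b, (g · - g x) =O[𝓝 x] (· - x))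
    (hd : ∀ᵐ x, x ∈ Ioo a b → HasDerivAt g 0 x) : g a = g b := by
  set B := {x | ¬ (x ∈ Ioo a b → HasDerivAt g 0 x)}
  have hB : volume B = 0 := ae_iff.1 hd
  have hgB : volume (g '' B) = 0 :=
    volume_image_null_of_isBigO_sub (v := id) (by simpa using hB) fun x hx =>
      hO x (Classical.not_imp.1 hx).1
  have hgG : volume (g '' {x ∈ Ioo a b | HasDerivAt g 0 x}) = 0 :=
    volume_image_null_of_hasDerivAt_zero fun x hx => hx.2
  have hcover : g '' Icc a b ⊆
      g '' {x ∈ Ioo a b | HasDerivAt g 0 x} ∪ g '' B ∪ g '' {a, b} := by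
    rintro _ ⟨x, hx, rfl⟩
    by_cases hxab : x ∈ ({a, b} : Set ℝ)
    · exact Or.inr (mem_image_of_mem g hxab)
    have hxI : x ∈ Ioo a b := by rw [← Icc_sdiff_both]; exact ⟨hx, hxab⟩
    by_cases hx' : HasDerivAt g 0 x
    · exact Or.inl (Or.inl ⟨x, ⟨hxI, hx'⟩, rfl⟩)
    · exact Or.inl (Or.inr ⟨x, fun h => hx' (h hxI), rfl⟩)
  have himage : volume (g '' Icc a b) = 0 :=
    measure_mono_null hcover <| measure_union_null (measure_union_null hgG hgB)
      ((((countable_singleton b).insert a).image g).measure_zero volume)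
  have hIVT : uIcc (g a) (g b) ⊆ g '' Icc a b := by
    simpa [uIcc_of_le hab] using intermediate_value_uIcc (hc.mono (uIcc_of_le hab).subset)
  have hlen := measure_mono_null hIVT himage
  rw [Real.volume_interval, ENNReal.ofReal_eq_zero, abs_nonpos_iff, sub_eq_zero] at hlen
  exact hlen.symm

theorem aestronglyMeasurable_of_ae_continuousWithinAt {α β : Type*} [TopologicalSpace α]
    [MeasurableSpace α] [OpensMeasurableSpace α] [TopologicalSpace β]
    [TopologicalSpace.PseudoMetrizableSpace β] [SecondCountableTopologyEither α β]
    {μ : Measure α} {f : α → β} {s : Set α}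
    (hs : MeasurableSet s) (hf : ∀ᵐ x ∂μ.restrict s, ContinuousWithinAt f s x) :
    AEStronglyMeasurable f (μ.restrict s) := by
  set Z := toMeasurable (μ.restrict s) {x | ¬ ContinuousWithinAt f s x}
  have hZ : μ (s ∩ Z) = 0 := by
    rw [inter_comm, ← Measure.restrict_apply (measurableSet_toMeasurable _ _),
      measure_toMeasurable]
    exact ae_iff.1 hf
  have hcont : ContinuousOn f (s \ Z) := fun x hx =>
    (not_not.1 fun h => hx.2 (subset_toMeasurable _ _ h)).mono sdiff_subset
  rw [← Measure.restrict_congr_set (sdiff_ae_eq_self.2 hZ)]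
  exact hcont.aestronglyMeasurable (hs.diff (measurableSet_toMeasurable _ _))

theorem RiemannIntegrableOn.integrableOn {f : ℝ → ℝ} {s : Set ℝ} (hf : RiemannIntegrableOn f s)
    (hs : MeasurableSet s) (hs' : volume s ≠ ⊤) : IntegrableOn f s := by
  obtain ⟨⟨M, hM⟩, hc⟩ := hf
  refine ⟨aestronglyMeasurable_of_ae_continuousWithinAt hs hc,
    .restrict_of_bounded M hs'.lt_top ?_⟩
  exact (ae_restrict_iff' hs).2 (ae_of_all _ fun x hx => hM x hx)

theorem lipschitzOnWith_primitive {f : ℝ → ℝ} {a b M : ℝ} (hf : IntegrableOn f (Icc a b))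
    (hM : ∀ x ∈ Icc a b, |f x| ≤ M) :
    LipschitzOnWith M.toNNReal (fun x => ∫ u in a..x, f u) (Icc a b) := by
  have hii : ∀ x ∈ Icc a b, ∀ y ∈ Icc a b, IntervalIntegrable f volume x y := fun x hx y hy =>
    (hf.mono_set (uIcc_subset_Icc hx hy)).intervalIntegrable
  refine LipschitzOnWith.of_dist_le_mul fun x hx y hy => ?_
  have ha : a ∈ Icc a b := left_mem_Icc.2 (hx.1.trans hx.2)
  rw [dist_eq_norm, integral_interval_sub_left (hii a ha x hx) (hii a ha y hy),
    Real.coe_toNNReal', Real.dist_eq]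
  refine intervalIntegral.norm_integral_le_of_norm_le_const (f := f) fun u hu => ?_
  exact (hM u (uIcc_subset_Icc hy hx (uIoc_subset_uIcc hu))).trans (le_max_left M 0)

theorem MeasureTheory.IntegrableOn.ae_hasDerivAt_primitive {f : ℝ → ℝ} {a b : ℝ} (hab : a ≤ b)
    (hf : IntegrableOn f (Icc a b)) :
    ∀ᵐ x, x ∈ Icc a b → HasDerivAt (fun x => ∫ u in a..x, f u) (f x) x := by
  have hii : IntervalIntegrable f volume a b :=
    (intervalIntegrable_iff_integrableOn_Icc_of_le hab).2 hf
  filter_upwards [hii.ae_hasDerivAt_integral] with x hx hxab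
  rw [uIcc_of_le hab] at hx
  exact hx hxab a (left_mem_Icc.2 hab)

theorem LipschitzOnWith.isBigO_comp_sub {α E F : Type*} [SeminormedAddCommGroup E]
    [SeminormedAddCommGroup F] {g : E → F} {φ : α → E} {K : ℝ≥0} {s : Set E} {l : Filter α}
    {y : E} (hg : LipschitzOnWith K g s) (hy : y ∈ s) (hφ : ∀ᶠ t in l, φ t ∈ s) :
    (fun t => g (φ t) - g y) =O[l] (fun t => φ t - y) :=
  IsBigO.of_bound K (hφ.mono fun t ht => by
    simpa only [← dist_eq_norm] using hg.dist_le_mul _ ht _ hy)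

theorem LipschitzOnWith.isBigO_comp_sub_of_hasDerivAt {g φ : ℝ → ℝ} {φ' : ℝ} {K : ℝ≥0}
    {s : Set ℝ} {t : ℝ} (hg : LipschitzOnWith K g s) (hφs : ∀ᶠ u in 𝓝 t, φ u ∈ s)
    (hφ : HasDerivAt φ φ' t) : (fun u => g (φ u) - g (φ t)) =O[𝓝 t] (· - t) :=
  (hg.isBigO_comp_sub hφs.self_of_nhds hφs).trans hφ.isBigO_sub

theorem LipschitzOnWith.hasDerivAt_comp_of_hasDerivAt_zero {g φ : ℝ → ℝ} {K : ℝ≥0}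
    {s : Set ℝ} {t : ℝ} (hg : LipschitzOnWith K g s) (hφs : ∀ᶠ u in 𝓝 t, φ u ∈ s)
    (hφ : HasDerivAt φ 0 t) : HasDerivAt (g ∘ φ) 0 t := by
  refine hasDerivAt_iff_isLittleO.2 ?_
  simpa using (hg.isBigO_comp_sub hφs.self_of_nhds hφs).trans_isLittleO
    (by simpa using hφ.isLittleO)

theorem LipschitzOnWith.ae_hasDerivAt_comp {g g' φ φ' : ℝ → ℝ} {K : ℝ≥0} {s U : Set ℝ}
    (hg : LipschitzOnWith K g s) (hg' : ∀ᵐ x, x ∈ s → HasDerivAt g (g' x) x) (hU : IsOpen U)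
    (hφs : MapsTo φ U s) (hφ : ∀ t ∈ U, HasDerivAt φ (φ' t) t) :
    ∀ᵐ t, t ∈ U → HasDerivAt (g ∘ φ) (g' (φ t) * φ' t) t := by
  set T := {t ∈ U | φ' t ≠ 0 ∧ ¬ HasDerivAt g (g' (φ t)) (φ t)}
  have hφT : volume (φ '' T) = 0 := by
    refine measure_mono_null ?_ (ae_iff.1 hg')
    rintro _ ⟨t, ⟨htU, -, ht⟩, rfl⟩
    exact fun h => ht (h (hφs htU))
  have hT : volume T = 0 := by
    simpa using volume_image_null_of_isBigO_sub (u := id) hφT fun t ht =>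
      ((hφ t ht.1).isTheta_sub ht.2.1).isBigO_symm.comp_tendsto
        (tendsto_id.prodMk tendsto_const_pure)
  filter_upwards [measure_eq_zero_iff_ae_notMem.1 hT] with t htT htU
  by_cases h0 : φ' t = 0
  · rw [h0, mul_zero]
    exact hg.hasDerivAt_comp_of_hasDerivAt_zero (eventually_of_mem (hU.mem_nhds htU) hφs)
      (h0 ▸ hφ t htU)
  · have hgt : HasDerivAt g (g' (φ t)) (φ t) := by
      by_contra h
      exact htT ⟨htU, h0, h⟩
    exact hgt.comp t (hφ t htU)

theorem stmt7 (a b α β : ℝ) (hab : a ≤ b) (hαβ : α ≤ β) (f φ φ' : ℝ → ℝ)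
    (hmap : ∀ t ∈ Set.Icc α β, φ t ∈ Set.Icc a b)
    (hφc : ContinuousOn φ (Set.Icc α β))
    (hφd : ∀ t ∈ Set.Ioo α β, HasDerivAt φ (φ' t) t)
    (hφα : φ α = a) (hφβ : φ β = b)
    (hf : RiemannIntegrableOn f (Set.Icc a b))
    (hprod : RiemannIntegrableOn (fun t => f (φ t) * φ' t) (Set.Icc α β)) :
    ∫ x in a..b, f x = ∫ t in α..β, f (φ t) * φ' t := by
  set F := fun x => ∫ u in a..x, f u
  set G := fun s => ∫ t in α..s, f (φ t) * φ' t
  have hfi : IntegrableOn f (Icc a b) :=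
    hf.integrableOn measurableSet_Icc measure_Icc_lt_top.ne
  have hpi : IntegrableOn (fun t => f (φ t) * φ' t) (Icc α β) :=
    hprod.integrableOn measurableSet_Icc measure_Icc_lt_top.ne
  have hF : LipschitzOnWith _ F (Icc a b) := lipschitzOnWith_primitive hfi hf.1.choose_spec
  have hG : LipschitzOnWith _ G (Icc α β) := lipschitzOnWith_primitive hpi hprod.1.choose_spec
  have hFφ : ∀ᵐ t, t ∈ Ioo α β → HasDerivAt (F ∘ φ) (f (φ t) * φ' t) t :=
    hF.ae_hasDerivAt_comp (hfi.ae_hasDerivAt_primitive hab) isOpen_Ioo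
      (fun t ht => hmap t (Ioo_subset_Icc_self ht)) hφd
  have hG' : ∀ᵐ t, t ∈ Ioo α β → HasDerivAt G (f (φ t) * φ' t) t := by
    filter_upwards [hpi.ae_hasDerivAt_primitive hαβ] with t ht htI
      using ht (Ioo_subset_Icc_self htI)
  have hD : (F ∘ φ - G) α = (F ∘ φ - G) β := by
    refine eq_of_isBigO_sub_of_ae_hasDerivAt_zero hαβ
      ((hF.continuousOn.comp hφc hmap).sub hG.continuousOn) (fun t ht => ?_) ?_
    · have hIcc : Icc α β ∈ 𝓝 t := Icc_mem_nhds ht.1 ht.2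
      exact ((hF.isBigO_comp_sub_of_hasDerivAt (mem_of_superset hIcc hmap) (hφd t ht)).sub
        (hG.isBigO_comp_sub_of_hasDerivAt hIcc (hasDerivAt_id t))).congr_left
        fun u => sub_sub_sub_comm _ _ _ _
    · filter_upwards [hFφ, hG'] with t hFt hGt ht
      simpa using (hFt ht).sub (hGt ht)
  simp only [Pi.sub_apply, Function.comp_apply, hφα, hφβ, F, G, integral_same] at hD
  linarith
end

section
/- Let f : I → ℝ be Riemann integrable on an interval I and φ : [α,β] → I continuous, differentiable on (α,β), with φ' almost everywhere continuous and (f∘φ)·φ' Riemann integrable on [α,β]. Suppose further that the preimage φ⁻¹({φ(α), φ(β)}) has Lebesgue measure zero. Define g : I → ℝ by g = f on the closed interval J with endpoints φ(α), φ(β) and g = 0 elsewhere. Then (g∘φ)·φ' is Riemann integrable and ∫_{φ(α)}^{φ(β)} g(x) dx = ∫_{φ(α)}^{φ(β)} f(x) dx = ∫_α^β f(φ(t))·φ'(t) dt = ∫_α^β g(φ(t))·φ'(t) dt. -/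
/-!
For `u = f` and for `u = g`, let `F` be a primitive of `u` on the compact interval
`φ '' [α, β]`. Being Lipschitz, `F` makes `F ∘ φ - F (φ t) = O(φ - φ t) = O(· - t)` at every
interior `t`, and `F ∘ φ` has derivative `u (φ t) * φ' t` wherever `φ' t = 0` or `F` is
differentiable at `φ t`; by the Serrin–Varberg lemma the remaining `t` form a null set. A
function with such a pointwise Lipschitz estimate maps null sets to null sets, so if its
derivative vanishes almost everywhere, its image is null (Sard on the good set) and, by the
intermediate value theorem, it is constant. Applied to `F ∘ φ` minus the primitive of
`(u ∘ φ) * φ'`, this is the substitution formula. Cutting `f` off outside the interval `J` only adds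
discontinuities at points sent to the endpoints of `J`, hence the integrability of `g` and of
`(g ∘ φ) * φ'`.
-/

open MeasureTheory Set Filter Topology intervalIntegral

open Asymptotics

theorem ContinuousWithinAt.indicator_preimage {F k : ℝ → ℝ} {s J : Set ℝ} {t : ℝ}
    (hF : ContinuousWithinAt F s t) (hk : ContinuousWithinAt k s t) (ht : k t ∉ frontier J) :
    ContinuousWithinAt ((k ⁻¹' J).indicator F) s t := by
  by_cases hint : k t ∈ interior J
  · have hev : (k ⁻¹' J).indicator F =ᶠ[𝓝[s] t] F := by
      filter_upwards [hk.eventually_mem (isOpen_interior.mem_nhds hint)] with v hv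
      exact indicator_of_mem (s := k ⁻¹' J) (interior_subset (s := J) hv) F
    exact hF.congr_of_eventuallyEq hev
      (indicator_of_mem (s := k ⁻¹' J) (interior_subset (s := J) hint) F)
  · have hcl : k t ∈ (closure J)ᶜ := fun h => ht ⟨h, hint⟩
    have hev : (k ⁻¹' J).indicator F =ᶠ[𝓝[s] t] fun _ => 0 := by
      filter_upwards [hk.eventually_mem (isClosed_closure.isOpen_compl.mem_nhds hcl)] with v hv
      exact indicator_of_notMem (s := k ⁻¹' J) (fun h => hv (subset_closure h)) F
    exact continuousWithinAt_const.congr_of_eventuallyEq hev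
      (indicator_of_notMem (s := k ⁻¹' J) (fun h => hcl (subset_closure h)) F)

theorem frontier_uIcc_subset (a b : ℝ) : frontier (uIcc a b) ⊆ {a, b} := by
  rw [uIcc, frontier_Icc min_le_max]
  rintro x (rfl | rfl)
  · rcases min_choice a b with h | h <;> simp [h]
  · rcases max_choice a b with h | h <;> simp [h]

theorem LipschitzOnWith.isBigO_comp_sub_s12 {F φ : ℝ → ℝ} {K : NNReal} {S : Set ℝ} {t : ℝ}
    (hF : LipschitzOnWith K F S) (hφ : ∀ᶠ v in 𝓝 t, φ v ∈ S) :
    (fun v => F (φ v) - F (φ t)) =O[𝓝 t] (fun v => φ v - φ t) := by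
  refine IsBigO.of_bound K ?_
  filter_upwards [hφ] with v hv
  simpa [Real.dist_eq] using hF.dist_le_mul _ hv _ hφ.self_of_nhds

namespace RiemannIntegrableOn

variable {u : ℝ → ℝ} {s : Set ℝ}

theorem mono {t : Set ℝ} (hu : RiemannIntegrableOn u t) (hst : s ⊆ t) :
    RiemannIntegrableOn u s := by
  obtain ⟨⟨M, hM⟩, hc⟩ := hu
  refine ⟨⟨M, fun x hx => hM x (hst hx)⟩, ?_⟩
  filter_upwards [ae_mono (Measure.restrict_mono hst le_rfl) hc] with x hx
  exact hx.mono hst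

theorem congr {v : ℝ → ℝ} (hu : RiemannIntegrableOn u s) (hs : MeasurableSet s)
    (huv : EqOn u v s) : RiemannIntegrableOn v s := by
  obtain ⟨⟨M, hM⟩, hc⟩ := hu
  refine ⟨⟨M, fun x hx => huv hx ▸ hM x hx⟩, ?_⟩
  filter_upwards [hc, ae_restrict_mem hs] with x hx hxs
  exact hx.congr (fun y hy => (huv hy).symm) (huv hxs).symm

theorem integrableOn_s12 (hu : RiemannIntegrableOn u s) (hs : MeasurableSet s)
    (hfin : volume s ≠ ⊤) : IntegrableOn u s := by
  obtain ⟨⟨M, hM⟩, hc⟩ := hu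
  set C := {x ∈ s | ContinuousWithinAt u s x}
  have hC : ∀ᵐ x ∂volume.restrict s, x ∈ C := (ae_restrict_mem hs).and hc
  have hCu : ContinuousOn u C := fun x hx => hx.2.mono fun _ hy => hy.1
  have hmeas : AEStronglyMeasurable u (volume.restrict s) := by
    rw [← Measure.restrict_eq_self_of_ae_mem hC]
    exact (hCu.aemeasurable₀ (NullMeasurableSet.congr nullMeasurableSet_univ
      (ae_eq_univ.2 (ae_iff.1 hC)).symm)).aestronglyMeasurable
  have : IsFiniteMeasure (volume.restrict s) := isFiniteMeasure_restrict.2 hfin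
  exact ⟨hmeas, .of_bounded (C := M) ((ae_restrict_mem hs).mono fun x hx => hM x hx)⟩

theorem indicator_preimage {F k : ℝ → ℝ} {J : Set ℝ} (hF : RiemannIntegrableOn F s)
    (hs : MeasurableSet s) (hk : ContinuousOn k s)
    (hJ : ∀ᵐ t ∂volume.restrict s, k t ∉ frontier J) :
    RiemannIntegrableOn ((k ⁻¹' J).indicator F) s := by
  obtain ⟨⟨M, hM⟩, hc⟩ := hF
  refine ⟨⟨M, fun x hx => ?_⟩, ?_⟩
  · exact (norm_indicator_le_norm_self (s := k ⁻¹' J) (f := F) (a := x)).trans (hM x hx)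
  · filter_upwards [hc, hJ, ae_restrict_mem hs] with t hFt hJt hts
    exact hFt.indicator_preimage (hk t hts) hJt

theorem indicator_preimage_uIcc {F k : ℝ → ℝ} {c d : ℝ} (hF : RiemannIntegrableOn F s)
    (hs : MeasurableSet s) (hk : ContinuousOn k s)
    (hkcd : volume {t ∈ s | k t = c ∨ k t = d} = 0) :
    RiemannIntegrableOn ((k ⁻¹' uIcc c d).indicator F) s := by
  refine hF.indicator_preimage hs hk <|
    (ae_restrict_iff' hs).2 (ae_iff.2 (measure_mono_null (fun t ht => ?_) hkcd))
  obtain ⟨hts, hfr⟩ := Classical.not_imp.1 ht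
  exact ⟨hts, frontier_uIcc_subset c d (not_not.1 hfr)⟩

section Primitive

variable {a b : ℝ}

theorem exists_lipschitzOnWith_primitive (hu : RiemannIntegrableOn u (Icc a b)) :
    ∃ K, LipschitzOnWith K (fun x => ∫ t in a..x, u t) (Icc a b) := by
  obtain ⟨M, hM⟩ := hu.1
  have hint := hu.integrableOn_s12 measurableSet_Icc measure_Icc_lt_top.ne
  refine ⟨M.toNNReal, LipschitzOnWith.of_dist_le_mul fun x hx y hy => ?_⟩
  have hii : ∀ z ∈ Icc a b, IntervalIntegrable u volume a z := fun z hz =>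
    (hint.mono_set (uIcc_subset_Icc ⟨le_rfl, hz.1.trans hz.2⟩ hz)).intervalIntegrable
  rw [Real.dist_eq, Real.dist_eq, integral_interval_sub_left (hii x hx) (hii y hy),
    Real.coe_toNNReal']
  refine intervalIntegral.norm_integral_le_of_norm_le_const (f := u) fun z hz => ?_
  exact (hM z (uIcc_subset_Icc hy hx (uIoc_subset_uIcc hz))).trans (le_max_left M 0)

theorem ae_hasDerivAt_primitive (hu : RiemannIntegrableOn u (Icc a b)) :
    ∀ᵐ x, x ∈ Icc a b → HasDerivAt (fun x => ∫ t in a..x, u t) (u x) x := by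
  have hint := hu.integrableOn_s12 measurableSet_Icc measure_Icc_lt_top.ne
  filter_upwards [(ae_restrict_iff' measurableSet_Icc).1 hu.2, Ioo_ae_eq_Icc.mem_iff]
    with x hcont hIoo hx
  have hnhds : Icc a b ∈ 𝓝 x := Icc_mem_nhds (hIoo.2 hx).1 (hIoo.2 hx).2
  exact integral_hasDerivAt_right
    (hint.mono_set (uIcc_subset_Icc ⟨le_rfl, hx.1.trans hx.2⟩ hx)).intervalIntegrable
    ⟨Icc a b, hnhds, hint.aestronglyMeasurable⟩ ((hcont hx).continuousAt hnhds)

end Primitive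

end RiemannIntegrableOn

theorem LipschitzOnWith.volume_image_eq_zero {f : ℝ → ℝ} {K : NNReal} {s : Set ℝ}
    (hf : LipschitzOnWith K f s) (hs : volume s = 0) : volume (f '' s) = 0 := by
  have h := hf.hausdorffMeasure_image_le zero_le_one
  rwa [hausdorffMeasure_real, hs, mul_zero, nonpos_iff_eq_zero] at h

theorem Asymptotics.IsBigO.exists_nat_bound {g h : ℝ → ℝ} {t : ℝ} (hgh : g =O[𝓝 t] h) :
    ∃ n : ℕ, ∀ u, dist u t ≤ ((n : ℝ) + 1)⁻¹ → |g u| ≤ (n + 1) * |h u| := by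
  obtain ⟨C, hC⟩ := hgh.bound
  obtain ⟨δ, hδ, hball⟩ := Metric.eventually_nhds_iff.1 hC
  obtain ⟨n, hn⟩ := exists_nat_gt (max C δ⁻¹)
  have hCn : C ≤ n + 1 := by linarith [le_max_left C δ⁻¹]
  have hδn : ((n : ℝ) + 1)⁻¹ < δ :=
    inv_lt_of_inv_lt₀ hδ (by linarith [le_max_right C δ⁻¹])
  refine ⟨n, fun u hu => (hball (hu.trans_lt hδn)).trans ?_⟩
  exact mul_le_mul_of_nonneg_right hCn (norm_nonneg _)

theorem volume_image_iUnion_eq_zero_of_small_pieces {f : ℝ → ℝ} (P : ℕ → Set ℝ)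
    (h : ∀ n, ∀ T ⊆ P n, (∀ x ∈ T, ∀ y ∈ T, dist x y ≤ ((n : ℝ) + 1)⁻¹) →
      volume (f '' T) = 0) :
    volume (f '' ⋃ n, P n) = 0 := by
  have hpieces : ∀ n, P n = ⋃ j : ℤ, P n ∩
      Icc (0 + j • ((n : ℝ) + 1)⁻¹) (0 + (j + 1) • ((n : ℝ) + 1)⁻¹) := fun n => by
    rw [← inter_iUnion, iUnion_Icc_add_zsmul (by positivity), inter_univ]
  rw [image_iUnion]
  refine measure_iUnion_null fun n => ?_
  rw [hpieces n, image_iUnion]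
  refine measure_iUnion_null fun j => h n _ inter_subset_left fun x hx y hy => ?_
  have := Real.dist_le_of_mem_Icc hx.2 hy.2
  rwa [add_zsmul, one_zsmul, zero_add, zero_add, add_sub_cancel_left] at this

theorem volume_image_eq_zero_of_isBigO {f : ℝ → ℝ} {s : Set ℝ} (hs : volume s = 0)
    (hf : ∀ t ∈ s, (fun u => f u - f t) =O[𝓝 t] (fun u => u - t)) : volume (f '' s) = 0 := by
  set P : ℕ → Set ℝ := fun n =>
    {t ∈ s | ∀ u, dist u t ≤ ((n : ℝ) + 1)⁻¹ → |f u - f t| ≤ (n + 1) * |u - t|}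
  have hcover : s ⊆ ⋃ n, P n := fun t ht => by
    obtain ⟨n, hn⟩ := (hf t ht).exists_nat_bound
    exact mem_iUnion.2 ⟨n, ht, hn⟩
  refine measure_mono_null (image_mono hcover) <|
    volume_image_iUnion_eq_zero_of_small_pieces P fun n T hT hdiam => ?_
  have hlip : LipschitzOnWith (n + 1) f T := LipschitzOnWith.of_dist_le_mul fun x hx y hy => by
    simpa [Real.dist_eq] using (hT hy).2 x (hdiam x hx y hy)
  exact hlip.volume_image_eq_zero (measure_mono_null (hT.trans (sep_subset _ _)) hs)

theorem volume_eq_zero_of_dist_le_mul_dist {φ : ℝ → ℝ} {K : NNReal} {T N : Set ℝ}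
    (hK : ∀ x ∈ T, ∀ y ∈ T, dist x y ≤ K * dist (φ x) (φ y)) (hmaps : MapsTo φ T N)
    (hN : volume N = 0) : volume T = 0 := by
  have hinj : InjOn φ T := fun x hx y hy hxy => by
    simpa [hxy] using hK x hx y hy
  have hlip : LipschitzOnWith K (Function.invFunOn φ T) (φ '' T) := by
    refine LipschitzOnWith.of_dist_le_mul ?_
    rintro _ ⟨x, hx, rfl⟩ _ ⟨y, hy, rfl⟩
    rw [hinj.leftInvOn_invFunOn hx, hinj.leftInvOn_invFunOn hy]
    exact hK x hx y hy
  have hT : T ⊆ Function.invFunOn φ T '' (φ '' T) := fun x hx =>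
    ⟨φ x, mem_image_of_mem φ hx, hinj.leftInvOn_invFunOn hx⟩
  exact measure_mono_null hT (hlip.volume_image_eq_zero
    (measure_mono_null (image_subset_iff.2 hmaps) hN))

theorem ae_deriv_eq_zero_of_mem_null {φ φ' : ℝ → ℝ} {A N : Set ℝ}
    (hd : ∀ t ∈ A, HasDerivAt φ (φ' t) t) (hN : volume N = 0) :
    ∀ᵐ t, t ∈ A → φ t ∈ N → φ' t = 0 := by
  set P : ℕ → Set ℝ := fun n => {t | t ∈ A ∧ φ t ∈ N ∧ φ' t ≠ 0 ∧
    ∀ u, dist u t ≤ ((n : ℝ) + 1)⁻¹ → |u - t| ≤ (n + 1) * |φ u - φ t|}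
  have hcover : {t | ¬(t ∈ A → φ t ∈ N → φ' t = 0)} ⊆ ⋃ n, P n := fun t ht => by
    obtain ⟨htA, htN, hne⟩ : t ∈ A ∧ φ t ∈ N ∧ φ' t ≠ 0 := by
      simpa only [mem_ofPred_eq, Classical.not_imp] using ht
    have hrev : (fun u => u - t) =O[𝓝 t] (fun u => φ u - φ t) :=
      (HasDerivAtFilter.isTheta_sub (hd t htA) hne).isBigO_symm.comp_tendsto
        (tendsto_id.prodMk tendsto_const_pure)
    obtain ⟨n, hn⟩ := hrev.exists_nat_bound
    exact mem_iUnion.2 ⟨n, htA, htN, hne, hn⟩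
  rw [ae_iff]
  refine measure_mono_null hcover ?_
  simpa using volume_image_iUnion_eq_zero_of_small_pieces (f := id) P fun n T hT hdiam => by
    rw [image_id]
    refine volume_eq_zero_of_dist_le_mul_dist (K := n + 1) (fun x hx y hy => ?_)
      (fun x hx => (hT hx).2.1) hN
    simpa [Real.dist_eq] using (hT hy).2.2.2 x (hdiam x hx y hy)

theorem volume_image_eq_zero_of_hasDerivAt_zero {w : ℝ → ℝ} {s : Set ℝ}
    (hw : ∀ t ∈ s, HasDerivAt w 0 t) : volume (w '' s) = 0 :=
  addHaar_image_eq_zero_of_det_fderivWithin_eq_zero volume (f' := fun _ => 0)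
    (fun t ht => by simpa using (hw t ht).hasFDerivAt.hasFDerivWithinAt) (fun _ _ => by simp)

theorem eq_of_ae_hasDerivAt_zero {w : ℝ → ℝ} {a b : ℝ} (hab : a ≤ b)
    (hw : ContinuousOn w (Icc a b)) (hd : ∀ᵐ t, t ∈ Ioo a b → HasDerivAt w 0 t)
    (hlip : ∀ t ∈ Ioo a b, (fun u => w u - w t) =O[𝓝 t] (fun u => u - t)) : w b = w a := by
  set G := {t ∈ Ioo a b | HasDerivAt w 0 t}
  set B := {t ∈ Ioo a b | ¬HasDerivAt w 0 t}
  have hB : volume B = 0 := measure_mono_null (fun t ht => fun h => ht.2 (h ht.1)) (ae_iff.1 hd)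
  have hcover : w '' Icc a b ⊆ w '' G ∪ w '' B ∪ {w a, w b} := by
    rintro _ ⟨t, ht, rfl⟩
    rcases eq_endpoints_or_mem_Ioo_of_mem_Icc ht with rfl | rfl | hIoo
    · simp
    · simp
    · by_cases hder : HasDerivAt w 0 t
      · exact Or.inl (Or.inl ⟨t, ⟨hIoo, hder⟩, rfl⟩)
      · exact Or.inl (Or.inr ⟨t, ⟨hIoo, hder⟩, rfl⟩)
  have hnull : volume (w '' Icc a b) = 0 := measure_mono_null hcover <|
    measure_union_null (measure_union_null
      (volume_image_eq_zero_of_hasDerivAt_zero (s := G) fun t ht => ht.2)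
      (volume_image_eq_zero_of_isBigO hB fun t ht => hlip t ht.1))
      ((toFinite _).measure_zero _)
  have hivt : uIcc (w a) (w b) ⊆ w '' Icc a b := by
    simpa [uIcc_of_le hab] using intermediate_value_uIcc (hw.mono (uIcc_of_le hab).subset)
  have := measure_mono_null hivt hnull
  rw [Real.volume_interval, ENNReal.ofReal_eq_zero, abs_nonpos_iff, sub_eq_zero] at this
  exact this

theorem integral_eq_sub_of_ae_hasDerivAt_of_isBigO {H h : ℝ → ℝ} {a b : ℝ} (hab : a ≤ b)
    (hH : ContinuousOn H (Icc a b)) (hh : RiemannIntegrableOn h (Icc a b))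
    (hder : ∀ᵐ t, t ∈ Ioo a b → HasDerivAt H (h t) t)
    (hlip : ∀ t ∈ Ioo a b, (fun u => H u - H t) =O[𝓝 t] (fun u => u - t)) :
    ∫ t in a..b, h t = H b - H a := by
  set U := fun x => ∫ t in a..x, h t
  obtain ⟨K, hK⟩ := hh.exists_lipschitzOnWith_primitive
  have hUlip : ∀ t ∈ Ioo a b, (fun u => U u - U t) =O[𝓝 t] (fun u => u - t) := fun t ht =>
    hK.isBigO_comp_sub_s12 (φ := id) (mem_of_superset (Ioo_mem_nhds ht.1 ht.2) Ioo_subset_Icc_self)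
  have hconst : H b - U b = H a - U a := by
    refine eq_of_ae_hasDerivAt_zero (w := fun x => H x - U x) hab (hH.sub hK.continuousOn) ?_
      fun t ht => ((hlip t ht).sub (hUlip t ht)).congr_left fun u => by ring
    filter_upwards [hder, hh.ae_hasDerivAt_primitive] with t hHt hUt ht
    have := (hHt ht).sub (hUt (Ioo_subset_Icc_self ht))
    rwa [sub_self] at this
  have hUa : U a = 0 := integral_same
  linarith

theorem integral_comp_mul_deriv_of_riemannIntegrableOn {φ φ' u : ℝ → ℝ} {α β : ℝ}
    (hαβ : α ≤ β) (hφc : ContinuousOn φ (Icc α β))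
    (hφd : ∀ t ∈ Ioo α β, HasDerivAt φ (φ' t) t)
    (hu : RiemannIntegrableOn u (φ '' Icc α β))
    (huφ : RiemannIntegrableOn (fun t => u (φ t) * φ' t) (Icc α β)) :
    ∫ x in φ α..φ β, u x = ∫ t in α..β, u (φ t) * φ' t := by
  set a := sInf (φ '' Icc α β)
  set b := sSup (φ '' Icc α β)
  have hS : φ '' Icc α β = Icc a b := hφc.image_Icc hαβ
  rw [hS] at hu
  have hmaps : MapsTo φ (Icc α β) (Icc a b) := hS ▸ mapsTo_image φ (Icc α β)
  set F := fun x => ∫ y in a..x, u y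
  obtain ⟨K, hK⟩ := hu.exists_lipschitzOnWith_primitive
  have hFφ : ∀ t ∈ Ioo α β,
      (fun v => F (φ v) - F (φ t)) =O[𝓝 t] (fun v => φ v - φ t) :=
    fun t ht => hK.isBigO_comp_sub_s12 <| mem_of_superset (Icc_mem_nhds ht.1 ht.2) hmaps
  have hN : volume {x | x ∈ Icc a b ∧ ¬HasDerivAt F (u x) x} = 0 := by
    refine measure_mono_null ?_ (ae_iff.1 hu.ae_hasDerivAt_primitive)
    exact fun x hx h => hx.2 (h hx.1)
  have hder : ∀ᵐ t, t ∈ Ioo α β → HasDerivAt (F ∘ φ) (u (φ t) * φ' t) t := by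
    filter_upwards [ae_deriv_eq_zero_of_mem_null hφd hN] with t hsv ht
    by_cases h0 : φ' t = 0
    · rw [h0, mul_zero, hasDerivAt_iff_isLittleO]
      have := (hφd t ht).isLittleO
      simp only [h0, smul_zero, sub_zero] at this ⊢
      exact (hFφ t ht).trans_isLittleO this
    · have hF : HasDerivAt F (u (φ t)) (φ t) := by
        by_contra hF
        exact h0 (hsv ht ⟨hmaps (Ioo_subset_Icc_self ht), hF⟩)
      exact hF.comp t (hφd t ht)
  have hint := hu.integrableOn_s12 measurableSet_Icc measure_Icc_lt_top.ne
  have hii : ∀ t ∈ Icc α β, IntervalIntegrable u volume a (φ t) := fun t ht =>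
    (hint.mono_set (uIcc_subset_Icc (left_mem_Icc.2 ((hmaps ht).1.trans (hmaps ht).2))
      (hmaps ht))).intervalIntegrable
  calc ∫ x in φ α..φ β, u x = F (φ β) - F (φ α) :=
        (integral_interval_sub_left (hii β (right_mem_Icc.2 hαβ))
          (hii α (left_mem_Icc.2 hαβ))).symm
    _ = ∫ t in α..β, u (φ t) * φ' t :=
        (integral_eq_sub_of_ae_hasDerivAt_of_isBigO hαβ (hK.continuousOn.comp hφc hmaps) huφ
          hder fun t ht => (hFφ t ht).trans (hφd t ht).isBigO_sub).symm

theorem stmt12_general (I : Set ℝ) (f : ℝ → ℝ) (α β : ℝ) (hαβ : α ≤ β)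
    (φ φ' : ℝ → ℝ) (hmap : ∀ t ∈ Set.Icc α β, φ t ∈ I)
    (hφc : ContinuousOn φ (Set.Icc α β))
    (hφd : ∀ t ∈ Set.Ioo α β, HasDerivAt φ (φ' t) t)
    (hf : RiemannIntegrableOn f I)
    (hprod : RiemannIntegrableOn (fun t => f (φ t) * φ' t) (Set.Icc α β))
    (hpre : volume {t ∈ Set.Icc α β | φ t = φ α ∨ φ t = φ β} = 0)
    (g : ℝ → ℝ)
    (hg : ∀ x ∈ I, g x = Set.indicator (Set.uIcc (φ α) (φ β)) f x) :
    RiemannIntegrableOn (fun t => g (φ t) * φ' t) (Set.Icc α β) ∧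
    ∫ x in (φ α)..(φ β), g x = ∫ x in (φ α)..(φ β), f x ∧
    ∫ x in (φ α)..(φ β), f x = ∫ t in α..β, f (φ t) * φ' t ∧
    ∫ t in α..β, f (φ t) * φ' t = ∫ t in α..β, g (φ t) * φ' t := by
  set S := φ '' Icc α β
  set J := uIcc (φ α) (φ β)
  have hSm : MeasurableSet S := (isCompact_Icc.image_of_continuousOn hφc).measurableSet
  have hSI : S ⊆ I := image_subset_iff.2 hmap
  have hJS : J ⊆ S := (isPreconnected_Icc.image φ hφc).ordConnected.uIcc_subset
    (mem_image_of_mem φ (left_mem_Icc.2 hαβ)) (mem_image_of_mem φ (right_mem_Icc.2 hαβ))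
  have hfS : RiemannIntegrableOn f S := hf.mono hSI
  have hgS : RiemannIntegrableOn g S := by
    refine (hfS.indicator_preimage_uIcc (k := id) hSm continuousOn_id ?_).congr hSm
      fun x hx => (hg x (hSI hx)).symm
    exact measure_mono_null (fun x hx => hx.2) ((toFinite {φ α, φ β}).measure_zero volume)
  have hgφ : RiemannIntegrableOn (fun t => g (φ t) * φ' t) (Icc α β) := by
    refine (hprod.indicator_preimage_uIcc measurableSet_Icc hφc hpre).congr measurableSet_Icc
      fun t ht => ?_
    rw [hg _ (hmap t ht), indicator_mul_left, ← indicator_comp_right]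
    rfl
  have hfg : ∫ x in φ α..φ β, g x = ∫ x in φ α..φ β, f x :=
    integral_congr fun x hx => (hg x (hSI (hJS hx))).trans (indicator_of_mem hx f)
  have hf_subst := integral_comp_mul_deriv_of_riemannIntegrableOn hαβ hφc hφd hfS hprod
  have hg_subst := integral_comp_mul_deriv_of_riemannIntegrableOn hαβ hφc hφd hgS hgφ
  exact ⟨hgφ, hfg, hf_subst, hf_subst.symm.trans (hfg.symm.trans hg_subst)⟩

theorem stmt12 (I : Set ℝ) (hI : I.OrdConnected) (f : ℝ → ℝ) (α β : ℝ) (hαβ : α ≤ β)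
    (φ φ' : ℝ → ℝ) (hmap : ∀ t ∈ Set.Icc α β, φ t ∈ I)
    (hφc : ContinuousOn φ (Set.Icc α β))
    (hφd : ∀ t ∈ Set.Ioo α β, HasDerivAt φ (φ' t) t)
    (hφ'c : ∀ᵐ t, t ∈ Set.Ioo α β → ContinuousWithinAt φ' (Set.Ioo α β) t)
    (hf : RiemannIntegrableOn f I)
    (hprod : RiemannIntegrableOn (fun t => f (φ t) * φ' t) (Set.Icc α β))
    (hpre : volume {t ∈ Set.Icc α β | φ t = φ α ∨ φ t = φ β} = 0)
    (g : ℝ → ℝ)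
    (hg : ∀ x ∈ I, g x = Set.indicator (Set.uIcc (φ α) (φ β)) f x) :
    RiemannIntegrableOn (fun t => g (φ t) * φ' t) (Set.Icc α β) ∧
    ∫ x in (φ α)..(φ β), g x = ∫ x in (φ α)..(φ β), f x ∧
    ∫ x in (φ α)..(φ β), f x = ∫ t in α..β, f (φ t) * φ' t ∧
    ∫ t in α..β, f (φ t) * φ' t = ∫ t in α..β, g (φ t) * φ' t :=
  stmt12_general I f α β hαβ φ φ' hmap hφc hφd hf hprod hpre g hg
end
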